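/- arXiv:2412.21057 — 2 statements merged into one kernel-verified Lean document; each statement's English description precedes it below -/
import Mathlib

section
/- (Argument oscillation bound) Let φ : A_q → ℂ be a biholomorphism onto its image A with continuous extension φ̄ : Ā_q → Ā, and suppose 0 ∉ Ā. Let θ̃ : [q,1] × [0,2π] → ℝ be a continuous lift of (u,t) ↦ arg(φ̄(u·e^{it})) ∈ ℝ/2πℤ. Then for every u ∈ [q,1], the oscillation osc_u := max_{t} θ̃(u,t) - min_t θ̃(u,t) satisfies osc_u ≤ max(osc_q, osc_1) + 2π. -/
open Complex

/-- Oscillation of θ̃ on the circle of radius u. -/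
noncomputable def osc (thetaLift : ℝ × ℝ → ℝ) (u : ℝ) : ℝ :=
  sSup ((fun t => thetaLift (u, t)) '' Set.Icc 0 (2 * Real.pi)) -
    sInf ((fun t => thetaLift (u, t)) '' Set.Icc 0 (2 * Real.pi))

/-!
Pass to the strip `log q ≤ re w ≤ 0` through `z = exp w`. Lifting `φ̄ ∘ exp` through the
covering map `exp` gives a continuous logarithm `L` on the closed strip, holomorphic inside,
whose imaginary part extends `θ̃` and satisfies `L (w + 2πi) = L w + 2πi n`. Injectivity of `φ`
forces `|n| ≤ 1`, because a simple closed curve winds at most once around a point off it.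
For fixed `δ` the function `exp (-i (L (w + iδ) - L w))` is bounded and holomorphic on the strip,
of modulus `exp (Im L (w + iδ) - Im L w)`, so by Phragmén–Lindelöf the increments of `Im L` over
steps `|δ| ≤ 2π` are bounded by those on the two boundary lines, which exceed `osc_q` resp.
`osc_1` by at most `2π |n| ≤ 2π`.
-/

open Set Filter Topology
open scoped Real

def IsContinuousLogOn {X : Type*} [TopologicalSpace X] (ℓ f : X → ℂ) (s : Set X) : Prop :=
  ContinuousOn ℓ s ∧ ∀ x ∈ s, exp (ℓ x) = f x

namespace IsContinuousLogOn

variable {X Y : Type*} [TopologicalSpace X] [TopologicalSpace Y] {ℓ ℓ₁ ℓ₂ f g : X → ℂ}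
  {s : Set X}

theorem comp {φ : Y → X} {t : Set Y} (h : IsContinuousLogOn ℓ f s) (hφ : ContinuousOn φ t)
    (hmaps : MapsTo φ t s) : IsContinuousLogOn (fun y ↦ ℓ (φ y)) (fun y ↦ f (φ y)) t :=
  ⟨h.1.comp hφ hmaps, fun _ hy ↦ h.2 _ (hmaps hy)⟩

theorem congr (h : IsContinuousLogOn ℓ f s) (hfg : EqOn f g s) : IsContinuousLogOn ℓ g s :=
  ⟨h.1, fun x hx ↦ (h.2 x hx).trans (hfg hx)⟩

theorem sub_eq_sub (hs : IsPreconnected s) (h₁ : IsContinuousLogOn ℓ₁ f s)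
    (h₂ : IsContinuousLogOn ℓ₂ f s) {x y : X} (hx : x ∈ s) (hy : y ∈ s) :
    ℓ₁ x - ℓ₂ x = ℓ₁ y - ℓ₂ y := by
  have hexp : ∀ z ∈ s, exp (ℓ₁ z - ℓ₂ z) = 1 := fun z hz ↦ by
    rw [exp_sub, h₁.2 z hz, ← h₂.2 z hz, div_self (exp_ne_zero _)]
  exact isCoveringMap_exp.constOn_of_comp hs (h₁.1.sub h₂.1)
    (fun z hz z' hz' ↦ Subtype.ext ((hexp z hz).trans (hexp z' hz').symm)) hx hy

theorem eqOn (hs : IsPreconnected s) (h₁ : IsContinuousLogOn ℓ₁ f s)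
    (h₂ : IsContinuousLogOn ℓ₂ f s) {x₀ : X} (hx₀ : x₀ ∈ s) (h : ℓ₁ x₀ = ℓ₂ x₀) :
    EqOn ℓ₁ ℓ₂ s := fun x hx ↦ by
  have := h₁.sub_eq_sub hs h₂ hx hx₀
  rwa [h, sub_self, sub_eq_zero] at this

end IsContinuousLogOn

theorem Convex.exists_isContinuousLogOn {E : Type*} [NormedAddCommGroup E] [NormedSpace ℝ E]
    {s : Set E} (hs : Convex ℝ s) {f : E → ℂ} (hf : ContinuousOn f s) (hf0 : ∀ x ∈ s, f x ≠ 0)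
    {x₀ : E} (hx₀ : x₀ ∈ s) {z₀ : ℂ} (hz₀ : exp z₀ = f x₀) :
    ∃ ℓ, IsContinuousLogOn ℓ f s ∧ ℓ x₀ = z₀ := by
  have := hs.contractibleSpace ⟨x₀, hx₀⟩
  have := hs.locallyPathConnectedSpace
  obtain ⟨F, ⟨hF₀, hF⟩, -⟩ := isCoveringMapOn_exp.existsUnique_continuousMap_lifts
    ⟨s.domRestrict f, continuousOn_iff_continuous_domRestrict.mp hf⟩ (a₀ := ⟨x₀, hx₀⟩) hz₀
    (fun x ↦ hf0 x x.2)
  classical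
  refine ⟨fun x ↦ if hx : x ∈ s then F ⟨x, hx⟩ else 0, ⟨?_, fun x hx ↦ ?_⟩, by simp [hx₀, hF₀]⟩
  · rw [continuousOn_iff_continuous_domRestrict]
    convert F.continuous using 1
    ext x
    simp [x.2]
  · simpa [hx] using congr_fun hF ⟨x, hx⟩

theorem one_sub_mem_slitPlane {z : ℂ} (hz : ‖z‖ ≤ 1) (hz1 : z ≠ 1) : 1 - z ∈ slitPlane := by
  refine Or.inl ?_
  rw [sub_re, one_re, sub_pos]
  refine (re_le_norm z).trans hz |>.lt_of_ne fun hre ↦ hz1 ?_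
  have him : z.im = 0 :=
    abs_re_eq_norm.mp (le_antisymm (abs_re_le_norm z) (hz.trans (by simp [hre])))
  exact Complex.ext (by simpa using hre) (by simpa using him)

namespace IsContinuousLogOn

variable {ℓ g : ℝ → ℂ} {a b : ℝ}

/-- `log (c * x) + log (1 - g / x)` is an explicit continuous logarithm of `c * (x - g)`, because
`g / x` stays in the closed unit disc and avoids `1`. -/
theorem eq_of_norm_le {c x : ℂ} (hab : a ≤ b)
    (hℓ : IsContinuousLogOn ℓ (fun t ↦ c * (x - g t)) (Icc a b))
    (hg : ContinuousOn g (Icc a b)) (hloop : g a = g b) (hc : c ≠ 0)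
    (hle : ∀ t ∈ Icc a b, ‖g t‖ ≤ ‖x‖) (hne : ∀ t ∈ Icc a b, g t ≠ x) : ℓ b = ℓ a := by
  have ha : a ∈ Icc a b := ⟨le_rfl, hab⟩
  have hx : x ≠ 0 := by
    rintro rfl
    exact hne a ha (norm_le_zero_iff.mp (by simpa using hle a ha))
  have hslit : ∀ t ∈ Icc a b, 1 - g t / x ∈ slitPlane := fun t ht ↦
    one_sub_mem_slitPlane (by rw [norm_div, div_le_one (norm_pos_iff.mpr hx)]; exact hle t ht)
      (by rw [Ne, div_eq_one_iff_eq hx]; exact hne t ht)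
  have hE : IsContinuousLogOn (fun t ↦ log (c * x) + log (1 - g t / x))
      (fun t ↦ c * (x - g t)) (Icc a b) := by
    refine ⟨continuousOn_const.add ((continuousOn_const.sub (hg.div_const x)).clog hslit),
      fun t ht ↦ ?_⟩
    rw [exp_add, exp_log (mul_ne_zero hc hx), exp_log (slitPlane_ne_zero (hslit t ht))]
    field_simp
  have := hℓ.sub_eq_sub isPreconnected_Icc hE ⟨hab, le_rfl⟩ ha
  rw [hloop] at this
  linear_combination this

/-- The torus argument: a logarithm `Λ` of `γ t - ζ * γ s` on the square `[a, b]²` compares the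
increment of `M` along the diagonal with those along two edges, which vanish by `eq_of_norm_le`
once each edge is moved through a point `t₀` where `‖γ‖` is maximal. -/
theorem eq_of_forall_ne_mul {M γ : ℝ → ℂ} {ζ : ℂ} (hab : a ≤ b)
    (hM : IsContinuousLogOn M γ (Icc a b)) (hloop : γ a = γ b) (hζ : ‖ζ‖ = 1)
    (hne : ∀ t ∈ Icc a b, ∀ s ∈ Icc a b, γ t ≠ ζ * γ s) : M b = M a := by
  have ha : a ∈ Icc a b := ⟨le_rfl, hab⟩
  have hb : b ∈ Icc a b := ⟨hab, le_rfl⟩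
  have hγ : ContinuousOn γ (Icc a b) := hM.1.cexp.congr fun t ht ↦ (hM.2 t ht).symm
  have hζ1 : 1 - ζ ≠ 0 := fun h ↦ hne a ha a ha (by rw [← sub_eq_zero.mp h, one_mul])
  obtain ⟨Λ, hΛ, -⟩ := ((convex_Icc a b).prod (convex_Icc a b)).exists_isContinuousLogOn
    (f := fun p ↦ γ p.1 - ζ * γ p.2)
    ((hγ.comp continuousOn_fst fun p hp ↦ hp.1).sub
      (continuousOn_const.mul (hγ.comp continuousOn_snd fun p hp ↦ hp.2)))
    (fun p hp ↦ sub_ne_zero.mpr (hne _ hp.1 _ hp.2)) (x₀ := (a, a)) ⟨ha, ha⟩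
    (exp_log (sub_ne_zero.mpr (hne a ha a ha)))
  have hrow : ∀ t ∈ Icc a b,
      IsContinuousLogOn (fun s ↦ Λ (t, s)) (fun s ↦ γ t - ζ * γ s) (Icc a b) := fun t ht ↦
    hΛ.comp (by fun_prop : Continuous fun s : ℝ ↦ (t, s)).continuousOn fun s hs ↦ ⟨ht, hs⟩
  have hcol : ∀ s ∈ Icc a b,
      IsContinuousLogOn (fun t ↦ Λ (t, s)) (fun t ↦ γ t - ζ * γ s) (Icc a b) := fun s hs ↦
    hΛ.comp (by fun_prop : Continuous fun t : ℝ ↦ (t, s)).continuousOn fun t ht ↦ ⟨ht, hs⟩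
  have hdiag : Λ (b, b) - Λ (a, a) = M b - M a := by
    have h₁ : IsContinuousLogOn (fun t ↦ Λ (t, t)) (fun t ↦ (1 - ζ) * γ t) (Icc a b) :=
      (hΛ.comp (by fun_prop : Continuous fun t : ℝ ↦ (t, t)).continuousOn
        fun t ht ↦ ⟨ht, ht⟩).congr fun t _ ↦ by ring
    have h₂ : IsContinuousLogOn (fun t ↦ log (1 - ζ) + M t) (fun t ↦ (1 - ζ) * γ t) (Icc a b) :=
      ⟨continuousOn_const.add hM.1, fun t ht ↦ by rw [exp_add, exp_log hζ1, hM.2 t ht]⟩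
    linear_combination h₁.sub_eq_sub isPreconnected_Icc h₂ hb ha
  obtain ⟨t₀, ht₀, hmax⟩ := isCompact_Icc.exists_isMaxOn ⟨a, ha⟩ hγ.norm
  have hbottom : Λ (b, a) - Λ (a, a) = 0 := by
    have hshift := (hrow b hb).sub_eq_sub isPreconnected_Icc
      ((hrow a ha).congr fun s _ ↦ by rw [hloop]) ha ht₀
    have hedge : Λ (b, t₀) = Λ (a, t₀) := eq_of_norm_le (c := -1) (x := ζ * γ t₀) hab
      ((hcol t₀ ht₀).congr fun t _ ↦ by ring) hγ hloop (by norm_num)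
      (fun t ht ↦ by rw [norm_mul, hζ, one_mul]; exact hmax ht) fun t ht ↦ hne t ht t₀ ht₀
    rw [hshift, hedge, sub_self]
  have hright : Λ (b, b) - Λ (b, a) = 0 := by
    have hshift := (hcol b hb).sub_eq_sub isPreconnected_Icc
      ((hcol a ha).congr fun t _ ↦ by rw [hloop]) hb ht₀
    have hedge : Λ (t₀, b) = Λ (t₀, a) := eq_of_norm_le (c := 1) (g := fun s ↦ ζ * γ s) hab
      ((hrow t₀ ht₀).congr fun s _ ↦ by ring) (continuousOn_const.mul hγ) (by rw [hloop])
      one_ne_zero (fun s hs ↦ by rw [norm_mul, hζ, one_mul]; exact hmax hs)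
      fun s hs h ↦ hne t₀ ht₀ s hs h.symm
    rw [hshift, hedge, sub_self]
  linear_combination hbottom + hright - hdiag

/-- If `|n| ≥ 2`, the `n`-th root `γ = exp (ℓ / n)` of the curve winds once around `0`, and
injectivity gives `γ t ≠ ζ * γ s` for `ζ = exp (2πi / n)`, which `eq_of_forall_ne_mul` forbids. -/
theorem abs_le_one_of_injOn {n : ℤ} (hab : a < b) (hℓ : IsContinuousLogOn ℓ g (Icc a b))
    (hinj : InjOn g (Ico a b)) (hloop : g a = g b) (hn : ℓ b = ℓ a + n * (2 * π * I)) :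
    |n| ≤ 1 := by
  by_contra! hn1
  have hn0 : (n : ℂ) ≠ 0 := by exact_mod_cast abs_pos.mp (one_pos.trans hn1)
  set γ : ℝ → ℂ := fun t ↦ exp (ℓ t / n)
  set ζ : ℂ := exp (2 * π * I / n)
  have hM : IsContinuousLogOn (fun t ↦ ℓ t / n) γ (Icc a b) := ⟨hℓ.1.div_const _, fun _ _ ↦ rfl⟩
  have hγloop : γ a = γ b := by
    simp only [γ, hn, add_div, mul_div_cancel_left₀ _ hn0, exp_add, exp_two_pi_mul_I, mul_one]
  have hpow : ∀ t ∈ Icc a b, g t = γ t ^ n := fun t ht ↦ by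
    rw [← hℓ.2 t ht, ← exp_int_mul, mul_div_cancel₀ _ hn0]
  have hζn : ζ ^ n = 1 := by rw [← exp_int_mul, mul_div_cancel₀ _ hn0, exp_two_pi_mul_I]
  have hζ1 : ζ ≠ 1 := fun h ↦ by
    obtain ⟨k, hk⟩ := exp_eq_one_iff.mp h
    rw [div_eq_iff hn0] at hk
    have hnk : ((n * k : ℤ) : ℂ) = 1 := by
      push_cast
      exact mul_left_cancel₀ two_pi_I_ne_zero (by linear_combination -hk)
    rcases Int.eq_one_or_neg_one_of_mul_eq_one' (by exact_mod_cast hnk) with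
      ⟨rfl, -⟩ | ⟨rfl, -⟩ <;> norm_num at hn1
  have hreduce : ∀ t ∈ Icc a b, ∃ t' ∈ Ico a b, g t' = g t ∧ γ t' = γ t := fun t ht ↦ by
    rcases ht.2.lt_or_eq with h | rfl
    · exact ⟨t, ⟨ht.1, h⟩, rfl, rfl⟩
    · exact ⟨a, ⟨le_rfl, hab⟩, hloop, hγloop⟩
  have hne : ∀ t ∈ Icc a b, ∀ s ∈ Icc a b, γ t ≠ ζ * γ s := fun t ht s hs h ↦ by
    obtain ⟨t', ht', hgt, hγt⟩ := hreduce t ht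
    obtain ⟨s', hs', hgs, hγs⟩ := hreduce s hs
    have hg : g t' = g s' := by rw [hgt, hgs, hpow t ht, hpow s hs, h, mul_zpow, hζn, one_mul]
    rw [← hγt, ← hγs, hinj ht' hs' hg] at h
    exact hζ1 (mul_right_cancel₀ (exp_ne_zero (ℓ s' / n)) (h.symm.trans (one_mul _).symm))
  have hζ : ‖ζ‖ = 1 := by simp [ζ, norm_exp]
  have := hM.eq_of_forall_ne_mul hab.le hγloop hζ hne
  rw [hn, add_div, mul_div_cancel_left₀ _ hn0, add_eq_left] at this
  exact two_pi_I_ne_zero this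

end IsContinuousLogOn

/-- Near `z`, `f w = f z + log (exp (f w) / exp (f z))`. -/
theorem ContinuousAt.differentiableAt_of_cexp {f : ℂ → ℂ} {z : ℂ} (hc : ContinuousAt f z)
    (hd : DifferentiableAt ℂ (fun w ↦ exp (f w)) z) : DifferentiableAt ℂ f z := by
  have hev : (fun w ↦ f z + Complex.log (exp (f w) / exp (f z))) =ᶠ[𝓝 z] f := by
    filter_upwards [hc.eventually (Metric.ball_mem_nhds (f z) Real.pi_pos)] with w hw
    have him := (abs_le.mp (abs_im_le_norm (f w - f z))).symm
    rw [dist_eq] at hw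
    rw [← exp_sub, log_exp (by linarith [him.2]) (by linarith [him.1])]
    ring
  refine (DifferentiableAt.const_add _ ?_).congr_of_eventuallyEq hev.symm
  exact DifferentiableAt.clog (hd.div_const (exp (f z))) (by simp)

theorem IsContinuousLogOn.differentiableOn {L f : ℂ → ℂ} {s U : Set ℂ}
    (hL : IsContinuousLogOn L f s) (hU : IsOpen U) (hUs : U ⊆ s) (hf : DifferentiableOn ℂ f U) :
    DifferentiableOn ℂ L U := fun w hw ↦ by
  have hs : s ∈ 𝓝 w := mem_of_superset (hU.mem_nhds hw) hUs
  exact (ContinuousAt.differentiableAt_of_cexp (hL.1.continuousAt hs)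
    ((hf.differentiableAt (hU.mem_nhds hw)).congr_of_eventuallyEq
      (eventually_of_mem hs hL.2))).differentiableWithinAt

theorem exists_isContinuousLogOn_vertical_strip {F : ℂ → ℂ} {a b : ℝ}
    (hF : ContinuousOn F (re ⁻¹' Icc a b)) (hF0 : ∀ w ∈ re ⁻¹' Icc a b, F w ≠ 0)
    (hper : Function.Periodic F (2 * π * I)) {w₀ z₀ : ℂ} (hw₀ : w₀ ∈ re ⁻¹' Icc a b)
    (hz₀ : exp z₀ = F w₀) :
    ∃ L, IsContinuousLogOn L F (re ⁻¹' Icc a b) ∧ L w₀ = z₀ ∧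
      ∃ n : ℤ, ∀ w ∈ re ⁻¹' Icc a b, L (w + 2 * π * I) = L w + n * (2 * π * I) := by
  have hmaps : MapsTo (· + 2 * π * I) (re ⁻¹' Icc a b) (re ⁻¹' Icc a b) := fun w hw ↦ by
    simpa using hw
  obtain ⟨L, hL, hL₀⟩ := ((convex_Icc a b).linear_preimage reLm).exists_isContinuousLogOn hF hF0
    hw₀ hz₀
  have hshift : IsContinuousLogOn (fun w ↦ L (w + 2 * π * I)) F (re ⁻¹' Icc a b) :=
    (hL.comp (continuousOn_id.add continuousOn_const) hmaps).congr fun w _ ↦ hper w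
  have hconvex : IsPreconnected (re ⁻¹' Icc a b) :=
    ((convex_Icc a b).linear_preimage reLm).isPreconnected
  obtain ⟨n, hn⟩ : ∃ n : ℤ, L (w₀ + 2 * π * I) - L w₀ = n * (2 * π * I) :=
    exp_eq_one_iff.mp <| by
      rw [exp_sub, hshift.2 w₀ hw₀, hL.2 w₀ hw₀, div_self (hz₀ ▸ exp_ne_zero z₀)]
  refine ⟨L, hL, hL₀, n, fun w hw ↦ ?_⟩
  linear_combination hshift.sub_eq_sub hconvex hL hw hw₀ + hn

/-- `L (x + t i)` and `Re L (x + t i) + Θ (x, t) i` are continuous logarithms of the same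
function on the rectangle. -/
theorem IsContinuousLogOn.im_eq {F L : ℂ → ℂ} {Θ : ℝ × ℝ → ℝ} {a b c d : ℝ}
    (hL : IsContinuousLogOn L F (re ⁻¹' Icc a b)) (hΘ : ContinuousOn Θ (Icc a b ×ˢ Icc c d))
    (hlift : ∀ p ∈ Icc a b ×ˢ Icc c d,
      exp (Θ p * I) = F (p.1 + p.2 * I) / ‖F (p.1 + p.2 * I)‖)
    {p₀ : ℝ × ℝ} (hp₀ : p₀ ∈ Icc a b ×ˢ Icc c d) (h₀ : (L (p₀.1 + p₀.2 * I)).im = Θ p₀) :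
    ∀ p ∈ Icc a b ×ˢ Icc c d, (L (p.1 + p.2 * I)).im = Θ p := by
  have hmaps : MapsTo (fun p : ℝ × ℝ ↦ (p.1 + p.2 * I : ℂ)) (Icc a b ×ˢ Icc c d)
      (re ⁻¹' Icc a b) := fun p hp ↦ by simpa using hp.1
  have h₁ := hL.comp (by fun_prop : Continuous fun p : ℝ × ℝ ↦ (p.1 + p.2 * I : ℂ)).continuousOn
    hmaps
  have h₂ : IsContinuousLogOn (fun p ↦ (L (p.1 + p.2 * I)).re + Θ p * I)
      (fun p ↦ F (p.1 + p.2 * I)) (Icc a b ×ˢ Icc c d) := by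
    refine ⟨(continuous_ofReal.comp_continuousOn (continuous_re.comp_continuousOn h₁.1)).add
      ((continuous_ofReal.comp_continuousOn hΘ).mul continuousOn_const), fun p hp ↦ ?_⟩
    have hexp : exp (L (p.1 + p.2 * I)) = F (p.1 + p.2 * I) := h₁.2 p hp
    have hF0 : (‖F (p.1 + p.2 * I)‖ : ℂ) ≠ 0 := by
      rw [← hexp]; exact_mod_cast (norm_pos_iff.mpr (exp_ne_zero _)).ne'
    rw [exp_add, hlift p hp, ← ofReal_exp, ← norm_exp, hexp, mul_div_cancel₀ _ hF0]
  intro p hp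
  have := h₁.eqOn ((isPreconnected_Icc).prod isPreconnected_Icc) h₂ hp₀
    (Complex.ext (by simp) (by simpa using h₀)) hp
  simpa using congr_arg im this

theorem sub_le_of_map_add_period {h : ℝ → ℝ} {T D : ℝ} {m : ℤ} (hT : 0 < T) (hm : |m| ≤ 1)
    (hper : ∀ y, h (y + T) = h y + m * T) (hD : ∀ t ∈ Icc 0 T, ∀ s ∈ Icc 0 T, h t - h s ≤ D)
    (y : ℝ) {δ : ℝ} (hδ : |δ| ≤ T) : h (y + δ) - h y ≤ D + T := by
  have hperiodic : Function.Periodic (fun y ↦ h y - m * y) T := fun y ↦ by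
    simp only [hper]; ring
  set y₀ := toIcoMod hT 0 y
  have hy₀ : y₀ ∈ Ico 0 T := toIcoMod_mem_Ico' hT y
  have hred : h (y + δ) - h y = h (y₀ + δ) - h y₀ := by
    have hy : y = y₀ + toIcoDiv hT 0 y • T := (toIcoMod_add_toIcoDiv_zsmul hT 0 y).symm
    have h₁ := (hperiodic.zsmul (toIcoDiv hT 0 y)) (y₀ + δ)
    have h₂ := (hperiodic.zsmul (toIcoDiv hT 0 y)) y₀
    rw [zsmul_eq_mul] at h₁ h₂ hy
    rw [hy, add_right_comm]
    linarith
  rw [hred]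
  have hm' := abs_le.mp (show |(m : ℝ)| ≤ 1 by exact_mod_cast hm)
  obtain ⟨hδ₁, hδ₂⟩ := abs_le.mp hδ
  rcases lt_or_ge (y₀ + δ) 0 with hlo | hlo
  · have := hD (y₀ + δ + T) ⟨by linarith [hy₀.1], by linarith [hy₀.2]⟩ y₀
      (Ico_subset_Icc_self hy₀)
    nlinarith [hper (y₀ + δ)]
  rcases le_or_gt (y₀ + δ) T with hhi | hhi
  · linarith [hD (y₀ + δ) ⟨hlo, hhi⟩ y₀ (Ico_subset_Icc_self hy₀)]
  · have := hD (y₀ + δ - T) ⟨by linarith, by linarith [hy₀.2]⟩ y₀ (Ico_subset_Icc_self hy₀)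
    have := hper (y₀ + δ - T)
    rw [sub_add_cancel] at this
    nlinarith

theorem im_sub_le_of_map_add_two_pi_I {L : ℂ → ℂ} {x D δ : ℝ} {n : ℤ} (hn : |n| ≤ 1)
    (hper : ∀ y : ℝ, L (x + y * I + 2 * π * I) = L (x + y * I) + n * (2 * π * I))
    (hD : ∀ t ∈ Icc 0 (2 * π), ∀ s ∈ Icc 0 (2 * π), (L (x + t * I)).im - (L (x + s * I)).im ≤ D)
    (y : ℝ) (hδ : |δ| ≤ 2 * π) :
    (L (x + ↑(y + δ) * I)).im - (L (x + y * I)).im ≤ D + 2 * π := by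
  refine sub_le_of_map_add_period (h := fun y ↦ (L (x + y * I)).im) Real.two_pi_pos hn
    (fun y ↦ ?_) hD y hδ
  have hxy : (x : ℂ) + ↑(y + 2 * π) * I = x + y * I + 2 * π * I := by push_cast; ring
  rw [hxy, hper y]
  simp

/-- Phragmén–Lindelöf applied to `exp (-i (L (w + iδ) - L w))`, whose modulus is
`exp (Im L (w + iδ) - Im L w)`, moves the bound from the boundary lines into the strip. -/
theorem im_sub_le_of_vertical_strip {L : ℂ → ℂ} {a b D : ℝ} {n : ℤ} (hab : a < b)
    (hL : ContinuousOn L (re ⁻¹' Icc a b)) (hLd : DifferentiableOn ℂ L (re ⁻¹' Ioo a b))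
    (hper : ∀ w ∈ re ⁻¹' Icc a b, L (w + 2 * π * I) = L w + n * (2 * π * I)) (hn : |n| ≤ 1)
    (hDa : ∀ t ∈ Icc 0 (2 * π), ∀ s ∈ Icc 0 (2 * π), (L (a + t * I)).im - (L (a + s * I)).im ≤ D)
    (hDb : ∀ t ∈ Icc 0 (2 * π), ∀ s ∈ Icc 0 (2 * π), (L (b + t * I)).im - (L (b + s * I)).im ≤ D)
    {x t s : ℝ} (hx : x ∈ Icc a b) (ht : t ∈ Icc 0 (2 * π)) (hs : s ∈ Icc 0 (2 * π)) :
    (L (x + t * I)).im - (L (x + s * I)).im ≤ D + 2 * π := by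
  set δ := t - s
  have hδ : |δ| ≤ 2 * π := abs_le.mpr ⟨by linarith [ht.1, hs.2], by linarith [ht.2, hs.1]⟩
  have hstep : ∀ x ∈ Icc a b, ∀ {D'}, (∀ t ∈ Icc 0 (2 * π), ∀ s ∈ Icc 0 (2 * π),
      (L (x + t * I)).im - (L (x + s * I)).im ≤ D') →
      ∀ y : ℝ, (L (x + ↑(y + δ) * I)).im - (L (x + y * I)).im ≤ D' + 2 * π :=
    fun x hx _ hD' y ↦
      im_sub_le_of_map_add_two_pi_I hn (fun y ↦ hper _ (by simpa using hx)) hD' y hδ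
  obtain ⟨B, hB⟩ := (isCompact_Icc.reProdIm isCompact_Icc).exists_bound_of_continuousOn
    (hL.mono fun w hw ↦ hw.1 : ContinuousOn L (Icc a b ×ℂ Icc 0 (2 * π)))
  have hbounded : ∀ x ∈ Icc a b, ∀ t ∈ Icc 0 (2 * π), ∀ s ∈ Icc 0 (2 * π),
      (L (x + t * I)).im - (L (x + s * I)).im ≤ 2 * B := fun x hx t ht s hs ↦ by
    have h₁ := hB (x + t * I) ⟨by simpa using hx, by simpa using ht⟩
    have h₂ := hB (x + s * I) ⟨by simpa using hx, by simpa using hs⟩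
    linarith [(abs_le.mp ((abs_im_le_norm _).trans h₁)).2,
      (abs_le.mp ((abs_im_le_norm _).trans h₂)).1]
  set f : ℂ → ℂ := fun w ↦ exp (-I * (L (w + δ * I) - L w))
  have hnorm : ∀ w : ℂ,
      ‖f w‖ = Real.exp ((L (w.re + ↑(w.im + δ) * I)).im - (L (w.re + w.im * I)).im) :=
    fun w ↦ by
    rw [norm_exp, show (w.re : ℂ) + ↑(w.im + δ) * I = w + δ * I by
      push_cast; rw [add_mul, ← add_assoc, re_add_im], re_add_im]
    simp
  have hmaps : ∀ s : Set ℝ, MapsTo (· + δ * I) (re ⁻¹' s) (re ⁻¹' s) := fun s w hw ↦ by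
    simpa using hw
  have hfd : DiffContOnCl ℂ f (re ⁻¹' Ioo a b) := by
    refine ⟨((hLd.comp (differentiableOn_id.add_const _) (hmaps _)).sub hLd).const_mul _ |>.cexp,
      ?_⟩
    rw [closure_preimage_re, closure_Ioo hab.ne]
    exact ((hL.comp (continuousOn_id.add continuousOn_const) (hmaps _)).sub hL).const_mul _
      |>.cexp
  have hgrowth : f =O[comap (_root_.abs ∘ im) atTop ⊓ 𝓟 (re ⁻¹' Ioo a b)]
      fun w ↦ Real.exp ((2 * B + 2 * π) * Real.exp (0 * |w.im|)) :=
    Asymptotics.IsBigO.of_bound 1 <| eventually_inf_principal.mpr <| .of_forall fun w hw ↦ by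
      rw [hnorm, zero_mul, Real.exp_zero, mul_one, one_mul,
        Real.norm_of_nonneg (Real.exp_pos _).le, Real.exp_le_exp]
      exact hstep w.re ⟨hw.1.le, hw.2.le⟩ (hbounded w.re ⟨hw.1.le, hw.2.le⟩) w.im
  have key := PhragmenLindelof.vertical_strip (C := Real.exp (D + 2 * π)) (z := x + s * I) hfd
    ⟨0, div_pos Real.pi_pos (sub_pos.mpr hab), _, hgrowth⟩
    (fun w hw ↦ by rw [hnorm, hw, Real.exp_le_exp]; exact hstep a ⟨le_rfl, hab.le⟩ hDa w.im)
    (fun w hw ↦ by rw [hnorm, hw, Real.exp_le_exp]; exact hstep b ⟨hab.le, le_rfl⟩ hDb w.im)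
    (by simpa using hx.1) (by simpa using hx.2)
  rw [hnorm, Real.exp_le_exp] at key
  simpa [δ] using key

theorem exp_mem_closedAnnulus {q : ℝ} (hq : 0 < q) {w : ℂ}
    (hw : w ∈ re ⁻¹' Icc (Real.log q) 0) : exp w ∈ {z : ℂ | q ≤ ‖z‖ ∧ ‖z‖ ≤ 1} := by
  show q ≤ ‖exp w‖ ∧ ‖exp w‖ ≤ 1
  rw [norm_exp]
  exact ⟨(Real.log_le_iff_le_exp hq).mp hw.1, Real.exp_le_one_iff.mpr hw.2⟩

theorem exp_mem_openAnnulus {q : ℝ} (hq : 0 < q) {w : ℂ}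
    (hw : w ∈ re ⁻¹' Ioo (Real.log q) 0) : exp w ∈ {z : ℂ | q < ‖z‖ ∧ ‖z‖ < 1} := by
  show q < ‖exp w‖ ∧ ‖exp w‖ < 1
  rw [norm_exp]
  exact ⟨(Real.log_lt_iff_lt_exp hq).mp hw.1, Real.exp_lt_one_iff.mpr hw.2⟩

theorem abs_le_one_of_injOn_annulus {q : ℝ} (hq : 0 < q) (hq1 : q < 1) {F L : ℂ → ℂ} {n : ℤ}
    (hinj : InjOn F {z : ℂ | q < ‖z‖ ∧ ‖z‖ < 1})
    (hL : IsContinuousLogOn L (fun w ↦ F (exp w)) (re ⁻¹' Icc (Real.log q) 0))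
    (hper : ∀ w ∈ re ⁻¹' Icc (Real.log q) 0, L (w + 2 * π * I) = L w + n * (2 * π * I)) :
    |n| ≤ 1 := by
  obtain ⟨x₀, hx₀⟩ : (Ioo (Real.log q) 0).Nonempty := nonempty_Ioo.mpr (Real.log_neg hq hq1)
  have hmem : ∀ t : ℝ, (x₀ + t * I : ℂ) ∈ re ⁻¹' Ioo (Real.log q) 0 := fun t ↦ by
    simpa using hx₀
  have hshift : (x₀ : ℂ) + ↑(2 * π) * I = x₀ + ↑(0 : ℝ) * I + 2 * π * I := by push_cast; ring
  refine (hL.comp (by fun_prop : Continuous fun t : ℝ ↦ (x₀ + t * I : ℂ)).continuousOn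
    fun t _ ↦ Ioo_subset_Icc_self (hmem t)).abs_le_one_of_injOn Real.two_pi_pos
    (fun t ht s hs h ↦ ?_) (by simp only [hshift, exp_periodic _])
    (by simp only [hshift, hper _ (Ioo_subset_Icc_self (hmem 0))])
  have h := hinj (exp_mem_openAnnulus hq (hmem t)) (exp_mem_openAnnulus hq (hmem s)) h
  rw [exp_add, exp_add] at h
  exact Circle.exp_injOn_Ico (by simp) ht hs
    (Subtype.ext (by simpa [Circle.coe_exp] using mul_left_cancel₀ (exp_ne_zero _) h))

theorem sub_le_osc {θ : ℝ × ℝ → ℝ} {u t s : ℝ}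
    (hθ : ContinuousOn (fun t ↦ θ (u, t)) (Icc 0 (2 * π))) (ht : t ∈ Icc 0 (2 * π))
    (hs : s ∈ Icc 0 (2 * π)) : θ (u, t) - θ (u, s) ≤ osc θ u :=
  sub_le_sub (le_csSup (isCompact_Icc.bddAbove_image hθ) (mem_image_of_mem _ ht))
    (csInf_le (isCompact_Icc.bddBelow_image hθ) (mem_image_of_mem _ hs))

theorem osc_le {θ : ℝ × ℝ → ℝ} {u C : ℝ}
    (h : ∀ t ∈ Icc 0 (2 * π), ∀ s ∈ Icc 0 (2 * π), θ (u, t) - θ (u, s) ≤ C) : osc θ u ≤ C := by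
  have hne : ((fun t ↦ θ (u, t)) '' Icc 0 (2 * π)).Nonempty :=
    ⟨_, mem_image_of_mem _ (left_mem_Icc.mpr Real.two_pi_pos.le)⟩
  rw [osc, sub_le_iff_le_add]
  refine csSup_le hne ?_
  rintro _ ⟨t, ht, rfl⟩
  rw [← sub_le_iff_le_add']
  exact le_csInf hne fun _ ⟨s, hs, hs'⟩ ↦ hs' ▸ by linarith [h t ht s hs]

theorem exists_log_vertical_strip_im_eq {q : ℝ} (hq : 0 < q) (hq1 : q < 1) {φbar : ℂ → ℂ}
    {θ : ℝ × ℝ → ℝ} (hext : ContinuousOn φbar {z : ℂ | q ≤ ‖z‖ ∧ ‖z‖ ≤ 1})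
    (h0 : (0 : ℂ) ∉ φbar '' {z : ℂ | q ≤ ‖z‖ ∧ ‖z‖ ≤ 1})
    (hθ : ContinuousOn θ (Icc q 1 ×ˢ Icc 0 (2 * π)))
    (hlift : ∀ u ∈ Icc q 1, ∀ t ∈ Icc 0 (2 * π),
      exp (θ (u, t) * I) = φbar (u * exp (t * I)) / ‖φbar (u * exp (t * I))‖) :
    ∃ L : ℂ → ℂ, ∃ n : ℤ,
      IsContinuousLogOn L (fun w ↦ φbar (exp w)) (re ⁻¹' Icc (Real.log q) 0) ∧
      (∀ w ∈ re ⁻¹' Icc (Real.log q) 0, L (w + 2 * π * I) = L w + n * (2 * π * I)) ∧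
      ∀ u ∈ Icc q 1, ∀ t ∈ Icc 0 (2 * π), (L (Real.log u + t * I)).im = θ (u, t) := by
  have hlog : Real.log q ≤ 0 := (Real.log_neg hq hq1).le
  have hexp : ∀ x ∈ Icc (Real.log q) 0, Real.exp x ∈ Icc q 1 := fun x hx ↦
    ⟨(Real.log_le_iff_le_exp hq).mp hx.1, Real.exp_le_one_iff.mpr hx.2⟩
  have hF0 : ∀ w ∈ re ⁻¹' Icc (Real.log q) 0, φbar (exp w) ≠ 0 := fun w hw h ↦
    h0 ⟨_, exp_mem_closedAnnulus hq hw, h⟩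
  have hlift' : ∀ p ∈ Icc (Real.log q) 0 ×ˢ Icc 0 (2 * π), exp (θ (Real.exp p.1, p.2) * I) =
      φbar (exp (p.1 + p.2 * I)) / ‖φbar (exp (p.1 + p.2 * I))‖ := fun p hp ↦ by
    rw [exp_add, ← ofReal_exp]
    exact hlift _ (hexp p.1 hp.1) p.2 hp.2
  have hp₀ : (Real.log q, 0) ∈ Icc (Real.log q) 0 ×ˢ Icc 0 (2 * π) :=
    ⟨⟨le_rfl, hlog⟩, left_mem_Icc.mpr Real.two_pi_pos.le⟩
  have hw₀ : (Real.log q + (0 : ℝ) * I : ℂ) ∈ re ⁻¹' Icc (Real.log q) 0 := by simpa using hlog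
  have hnorm : 0 < ‖φbar (exp (Real.log q + (0 : ℝ) * I))‖ := norm_pos_iff.mpr (hF0 _ hw₀)
  obtain ⟨L, hL, hL₀, n, hper⟩ := exists_isContinuousLogOn_vertical_strip
    (F := fun w ↦ φbar (exp w))
    (hext.comp continuous_exp.continuousOn fun w hw ↦ exp_mem_closedAnnulus hq hw) hF0
    (fun w ↦ congrArg φbar (exp_periodic w)) hw₀
    (z₀ := Real.log ‖φbar (exp (Real.log q + (0 : ℝ) * I))‖ + θ (Real.exp (Real.log q), 0) * I)
    (by rw [exp_add, ← ofReal_exp, Real.exp_log hnorm, hlift' _ hp₀,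
      mul_div_cancel₀ _ (ofReal_ne_zero.mpr hnorm.ne')])
  refine ⟨L, n, hL, hper, fun u hu t ht ↦ ?_⟩
  have hu0 : 0 < u := hq.trans_le hu.1
  have := hL.im_eq
    (hθ.comp (by fun_prop : Continuous fun p : ℝ × ℝ ↦ (Real.exp p.1, p.2)).continuousOn
      fun p hp ↦ ⟨hexp p.1 hp.1, hp.2⟩) hlift' hp₀ (by dsimp only; rw [hL₀]; simp)
    (Real.log u, t) ⟨⟨Real.log_le_log hq hu.1, Real.log_nonpos hu0.le hu.2⟩, ht⟩
  simpa [Real.exp_log hu0] using this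

/-- Argument oscillation bound: for a biholomorphism φ of the annulus onto its image avoiding 0,
any continuous lift θ̃ of the argument of φ̄(u e^{it}) satisfies
osc_u ≤ max(osc_q, osc_1) + 2π for every u ∈ [q,1]. -/
theorem argument_oscillation_bound (q : ℝ) (hq : q ∈ Set.Ioo (0 : ℝ) 1)
    (φ φbar : ℂ → ℂ)
    (hhol : DifferentiableOn ℂ φ {z : ℂ | q < ‖z‖ ∧ ‖z‖ < 1})
    (hinj : Set.InjOn φ {z : ℂ | q < ‖z‖ ∧ ‖z‖ < 1})
    (hext : ContinuousOn φbar {z : ℂ | q ≤ ‖z‖ ∧ ‖z‖ ≤ 1})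
    (heq : Set.EqOn φbar φ {z : ℂ | q < ‖z‖ ∧ ‖z‖ < 1})
    (h0 : (0 : ℂ) ∉ φbar '' {z : ℂ | q ≤ ‖z‖ ∧ ‖z‖ ≤ 1})
    (thetaLift : ℝ × ℝ → ℝ)
    (hliftcont : ContinuousOn thetaLift (Set.Icc q 1 ×ˢ Set.Icc 0 (2 * Real.pi)))
    (hlift : ∀ u ∈ Set.Icc q 1, ∀ t ∈ Set.Icc 0 (2 * Real.pi),
      Complex.exp ((thetaLift (u, t) : ℂ) * Complex.I) =
        φbar ((u : ℂ) * Complex.exp ((t : ℂ) * Complex.I)) /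
          (↑(‖φbar ((u : ℂ) * Complex.exp ((t : ℂ) * Complex.I))‖) : ℂ)) :
    ∀ u ∈ Set.Icc q 1,
      osc thetaLift u ≤ max (osc thetaLift q) (osc thetaLift 1) + 2 * Real.pi := by
  intro u hu
  obtain ⟨hq0, hq1⟩ := hq
  obtain ⟨L, n, hL, hper, him⟩ := exists_log_vertical_strip_im_eq hq0 hq1 hext h0 hliftcont hlift
  have hn := abs_le_one_of_injOn_annulus hq0 hq1 (hinj.congr heq.symm) hL hper
  have hLd := hL.differentiableOn (isOpen_Ioo.preimage continuous_re)
    (preimage_mono Ioo_subset_Icc_self)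
    ((hhol.congr heq).comp differentiable_exp.differentiableOn fun w hw ↦
      exp_mem_openAnnulus hq0 hw)
  have hline : ∀ v ∈ Icc q 1, ∀ t ∈ Icc 0 (2 * π), ∀ s ∈ Icc 0 (2 * π),
      (L (Real.log v + t * I)).im - (L (Real.log v + s * I)).im ≤ osc thetaLift v :=
    fun v hv t ht s hs ↦ by
      rw [him v hv t ht, him v hv s hs]
      exact sub_le_osc (hliftcont.comp
        (by fun_prop : Continuous fun t : ℝ ↦ (v, t)).continuousOn fun t ht ↦ ⟨hv, ht⟩) ht hs
  have hu0 : 0 < u := hq0.trans_le hu.1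
  refine osc_le fun t ht s hs ↦ ?_
  rw [← him u hu t ht, ← him u hu s hs]
  exact im_sub_le_of_vertical_strip (Real.log_neg hq0 hq1) hL.1 hLd hper hn
    (fun t ht s hs ↦ (hline q ⟨le_rfl, hq1.le⟩ t ht s hs).trans (le_max_left _ _))
    (fun t ht s hs ↦ by
      simpa using (hline 1 ⟨hq1.le, le_rfl⟩ t ht s hs).trans (le_max_right _ _))
    ⟨Real.log_le_log hq0 hu.1, Real.log_nonpos hu0.le hu.2⟩ ht hs
end

section
/- If a Jordan curve c : S¹ → ℝ² is locally monotone, then for every p there is a neighborhood on which c is injective with image a monotone graph over the direction v(p); moreover the mollified curves c_n (as above) are, for n large, also strictly monotone on (possibly shrunk) neighborhoods U_p with respect to the same directions: q ↦ c_n(q)·v(p) is strictly monotone on U_p for n sufficiently large. -/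
open MeasureTheory


lemma aux_integrable (k : ℝ → ℝ) (hk : Continuous k) (d : ℝ)
    (hsupp : Function.support k ⊆ Set.Icc (-d) d)
    {E : Type*} [NormedAddCommGroup E] [NormedSpace ℝ E]
    (g : ℝ → E) (hg : Continuous g) :
    Integrable (fun u => k u • g u) := by
  apply Continuous.integrable_of_hasCompactSupport (hk.smul hg)
  apply HasCompactSupport.intro isCompact_Icc
  intro x hx
  have hkx : k x = 0 := by
    by_contra h
    exact hx (hsupp h)
  simp [hkx]

lemma aux_mono (k : ℝ → ℝ) (hk : Continuous k) (hknn : ∀ u, 0 ≤ k u)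
    (d : ℝ) (hsupp : Function.support k ⊆ Set.Icc (-d) d)
    (hkint : ∫ u, k u = 1)
    (f : ℝ → ℝ) (hf : Continuous f)
    (a b : ℝ) (hmono : StrictMonoOn f (Set.Ioo a b)) :
    StrictMonoOn (fun q => ∫ u, k u * f (q - u)) (Set.Ioo (a + d) (b - d)) := by
  intro q hq q' hq' hlt
  have hint : ∀ r : ℝ, Integrable (fun u => k u * f (r - u)) := fun r =>
    aux_integrable k hk d hsupp _ (hf.comp (continuous_const.sub continuous_id))
  have hki : Integrable k := by
    have := aux_integrable k hk d hsupp (fun _ => (1:ℝ)) continuous_const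
    simpa using this
  have hsuppk : 0 < MeasureTheory.volume (Function.support k) :=
    (integral_pos_iff_support_of_nonneg hknn hki).mp (by rw [hkint]; norm_num)
  set g : ℝ → ℝ := fun u => k u * (f (q' - u) - f (q - u)) with hg
  have hgpos : ∀ u, k u ≠ 0 → 0 < g u := by
    intro u hku
    have hu : u ∈ Set.Icc (-d) d := hsupp hku
    have h1 : q - u ∈ Set.Ioo a b := ⟨by linarith [hq.1, hu.2], by linarith [hq.2, hu.1]⟩
    have h2 : q' - u ∈ Set.Ioo a b := ⟨by linarith [hq'.1, hu.2], by linarith [hq'.2, hu.1]⟩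
    have hfl : f (q - u) < f (q' - u) := hmono h1 h2 (by linarith)
    exact mul_pos (lt_of_le_of_ne (hknn u) (Ne.symm hku)) (by linarith)
  have hgnn : 0 ≤ g := by
    intro u
    by_cases hku : k u = 0
    · simp [hg, hku]
    · exact le_of_lt (hgpos u hku)
  have hgi : Integrable g := ((hint q').sub (hint q)).congr (by
    filter_upwards with u
    simp [hg]; ring)
  have hsuppg : Function.support g = Function.support k := by
    ext u
    simp only [Function.mem_support]
    constructor
    · intro h hk0; exact h (by simp [hg, hk0])
    · intro h; exact ne_of_gt (hgpos u h)
  have hintg : 0 < ∫ u, g u := by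
    rw [integral_pos_iff_support_of_nonneg hgnn hgi, hsuppg]
    exact hsuppk
  have heq : ∫ u, g u = (∫ u, k u * f (q' - u)) - ∫ u, k u * f (q - u) := by
    rw [← integral_sub (hint q') (hint q)]
    congr 1; ext u; simp [hg]; ring
  simp only
  linarith [heq ▸ hintg]

lemma aux_anti (k : ℝ → ℝ) (hk : Continuous k) (hknn : ∀ u, 0 ≤ k u)
    (d : ℝ) (hsupp : Function.support k ⊆ Set.Icc (-d) d)
    (hkint : ∫ u, k u = 1)
    (f : ℝ → ℝ) (hf : Continuous f)
    (a b : ℝ) (hanti : StrictAntiOn f (Set.Ioo a b)) :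
    StrictAntiOn (fun q => ∫ u, k u * f (q - u)) (Set.Ioo (a + d) (b - d)) := by
  have hm : StrictMonoOn (fun q => -f q) (Set.Ioo a b) :=
    fun x hx y hy h => neg_lt_neg (hanti hx hy h)
  have key := aux_mono k hk hknn d hsupp hkint (fun q => -f q) hf.neg a b hm
  intro x hx y hy h
  have h2 := key hx hy h
  simp only at h2 ⊢
  have e : ∀ r : ℝ, ∫ u, k u * (-f (r - u)) = -∫ u, k u * f (r - u) := by
    intro r; rw [← integral_neg]; congr 1; ext u; ring
  rw [e x, e y] at h2
  linarith

lemma aux_dot (F : ℝ → ℝ × ℝ) (hF : Integrable F) (v : ℝ × ℝ) :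
    (∫ u, F u).1 * v.1 + (∫ u, F u).2 * v.2
      = ∫ u, ((F u).1 * v.1 + (F u).2 * v.2) := by
  have h1 : ∫ u, (F u).1 = (∫ u, F u).1 :=
    (ContinuousLinearMap.fst ℝ ℝ ℝ).integral_comp_comm hF
  have h2 : ∫ u, (F u).2 = (∫ u, F u).2 :=
    (ContinuousLinearMap.snd ℝ ℝ ℝ).integral_comp_comm hF
  have hi1 : Integrable (fun u => (F u).1) :=
    (ContinuousLinearMap.fst ℝ ℝ ℝ).integrable_comp hF
  have hi2 : Integrable (fun u => (F u).2) :=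
    (ContinuousLinearMap.snd ℝ ℝ ℝ).integrable_comp hF
  rw [← h1, ← h2, ← integral_mul_const, ← integral_mul_const,
    ← integral_add (hi1.mul_const _) (hi2.mul_const _)]

/-- If a Jordan curve c is locally monotone, then near each point p the curve is strictly
monotone in direction v(p), and for n large the mollified curves c_n are strictly monotone in
the same direction on a (possibly shrunk) neighborhood of p. -/
theorem mollified_locally_monotone (c : ℝ → ℝ × ℝ)
    (hcont : Continuous c) (hper : ∀ p, c (p + 2 * Real.pi) = c p)
    (hinj : Set.InjOn c (Set.Ico 0 (2 * Real.pi)))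
    (hlm : ∀ p : ℝ, ∃ U : Set ℝ, ∃ v : ℝ × ℝ,
      IsOpen U ∧ IsPreconnected U ∧ p ∈ U ∧ v.1 ^ 2 + v.2 ^ 2 = 1 ∧
      (StrictMonoOn (fun q => (c q).1 * v.1 + (c q).2 * v.2) U ∨
        StrictAntiOn (fun q => (c q).1 * v.1 + (c q).2 * v.2) U))
    (χ : ℝ → ℝ) (hχsmooth : ContDiff ℝ (⊤ : ℕ∞) χ) (hχpos : ∀ u, 0 ≤ χ u)
    (hχsupp : Function.support χ ⊆ Set.Icc (-1) 1) (hχint : ∫ u, χ u = 1)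
    (δ : ℕ → ℝ) (hδpos : ∀ n, 0 < δ n)
    (hδ0 : Filter.Tendsto δ Filter.atTop (nhds 0))
    (cn : ℕ → ℝ → ℝ × ℝ)
    (hcn : cn = fun n p => ∫ u, ((δ n)⁻¹ * χ ((δ n)⁻¹ * u)) • c (p - u)) :
    ∀ p : ℝ, ∃ U : Set ℝ, ∃ v : ℝ × ℝ,
      IsOpen U ∧ IsPreconnected U ∧ p ∈ U ∧ v.1 ^ 2 + v.2 ^ 2 = 1 ∧
      (StrictMonoOn (fun q => (c q).1 * v.1 + (c q).2 * v.2) U ∨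
        StrictAntiOn (fun q => (c q).1 * v.1 + (c q).2 * v.2) U) ∧
      ∃ N : ℕ, ∀ n ≥ N,
        StrictMonoOn (fun q => (cn n q).1 * v.1 + (cn n q).2 * v.2) U ∨
          StrictAntiOn (fun q => (cn n q).1 * v.1 + (cn n q).2 * v.2) U := by
  intro p
  obtain ⟨U, v, hUo, hUc, hpU, hv, hmora⟩ := hlm p
  obtain ⟨ε, hε, hball⟩ := Metric.isOpen_iff.mp hUo p hpU
  rw [Real.ball_eq_Ioo] at hball
  set U' : Set ℝ := Set.Ioo (p - ε / 2) (p + ε / 2) with hU'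
  have hsub : U' ⊆ U := by
    refine Set.Subset.trans ?_ hball
    exact Set.Ioo_subset_Ioo (by linarith) (by linarith)
  -- f := c · v
  set f : ℝ → ℝ := fun q => (c q).1 * v.1 + (c q).2 * v.2 with hf
  have hfcont : Continuous f := by
    apply Continuous.add
    · exact (hcont.fst.mul continuous_const)
    · exact (hcont.snd.mul continuous_const)
  -- choose N
  have hev : ∀ᶠ n in Filter.atTop, δ n < ε / 2 :=
    hδ0.eventually (Filter.Tendsto.eventually_lt_const (by linarith) Filter.tendsto_id)
  obtain ⟨N, hN⟩ := Filter.eventually_atTop.mp hev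
  refine ⟨U', v, isOpen_Ioo, isPreconnected_Ioo,
    ⟨by linarith, by linarith⟩, hv, ?_, N, ?_⟩
  · rcases hmora with h | h
    · exact Or.inl (h.mono hsub)
    · exact Or.inr (h.mono hsub)
  · intro n hn
    set dn := δ n with hdn
    have hdnpos : 0 < dn := hδpos n
    have hdnlt : dn < ε / 2 := hN n hn
    set k : ℝ → ℝ := fun u => dn⁻¹ * χ (dn⁻¹ * u) with hk
    have hkcont : Continuous k :=
      continuous_const.mul (hχsmooth.continuous.comp (continuous_const.mul continuous_id))
    have hknn : ∀ u, 0 ≤ k u := fun u =>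
      mul_nonneg (inv_nonneg.mpr hdnpos.le) (hχpos _)
    have hksupp : Function.support k ⊆ Set.Icc (-dn) dn := by
      intro u hu
      have hχu : χ (dn⁻¹ * u) ≠ 0 := by
        intro h0
        apply hu
        simp [hk, h0]
      have hmem : dn⁻¹ * u ∈ Set.Icc (-1 : ℝ) 1 := hχsupp hχu
      have hid : dn * (dn⁻¹ * u) = u := by
        field_simp
      constructor
      · nlinarith [hmem.1, hdnpos.le, hid]
      · nlinarith [hmem.2, hdnpos.le, hid]
    have hkint : ∫ u, k u = 1 := by
      rw [hk]
      simp only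
      rw [integral_const_mul, MeasureTheory.Measure.integral_comp_mul_left χ dn⁻¹, hχint]
      simp [abs_of_pos hdnpos, ne_of_gt hdnpos]
    -- identify cn n · v with the mollified f
    have hFint : ∀ q : ℝ, Integrable (fun u => k u • c (q - u)) := fun q =>
      aux_integrable k hkcont dn hksupp _ (hcont.comp (continuous_const.sub continuous_id))
    have hrepr : ∀ q : ℝ, (cn n q).1 * v.1 + (cn n q).2 * v.2
        = ∫ u, k u * f (q - u) := by
      intro q
      have hcnq : cn n q = ∫ u, k u • c (q - u) := by rw [hcn]
      rw [hcnq, aux_dot _ (hFint q) v]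
      congr 1
      ext u
      simp [hf, smul_eq_mul]
      ring
    have hUsub : U' ⊆ Set.Ioo ((p - ε) + dn) ((p + ε) - dn) :=
      Set.Ioo_subset_Ioo (by linarith) (by linarith)
    rcases hmora with h | h
    · left
      have hfm : StrictMonoOn f (Set.Ioo (p - ε) (p + ε)) := h.mono hball
      have key := (aux_mono k hkcont hknn dn hksupp hkint f hfcont _ _ hfm).mono hUsub
      intro x hx y hy hxy
      have := key hx hy hxy
      simpa only [hrepr x, hrepr y] using this
    · right
      have hfm : StrictAntiOn f (Set.Ioo (p - ε) (p + ε)) := h.mono hball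
      have key := (aux_anti k hkcont hknn dn hksupp hkint f hfcont _ _ hfm).mono hUsub
      intro x hx y hy hxy
      have := key hx hy hxy
      simpa only [hrepr x, hrepr y] using this
end
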